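/- Let W be an r × r lower triangular matrix with positive diagonal entries, Ω = W W^T, and parametrize W by ω = v(W*) where W*_{ii} = log(W_{ii}) and W*_{ij} = W_{ij} for i ≠ j. Let D^W be the diagonal matrix of order r(r+1)/2 with diagonal v(J^W), where J^W is the r × r matrix with J^W_{ii} = W_{ii} and all off-diagonal entries equal to 1. Then for any fixed b ∈ ℝ^r, the gradient with respect to ω of the function ω ↦ (1/2) log|Ω| − (1/2) b^T Ω b equals D^W v(W^{−T} − b b^T W). -/

import Mathlib

open Matrix

/-- The continuous linear map `v ↦ a ⬝ᵥ v`. -/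
noncomputable def dotCLM {ι : Type*} [Fintype ι] (a : ι → ℝ) : (ι → ℝ) →L[ℝ] ℝ :=
  LinearMap.toContinuousLinearMap
    { toFun := fun v => a ⬝ᵥ v
      map_add' := fun x y => dotProduct_add a x y
      map_smul' := fun c x => by simp [dotProduct_smul] }

/-- Index set of the lower-triangular positions of an `r × r` matrix
(the index set of the half-vectorization `v(·)`). -/
abbrev LTIdx (r : ℕ) := {q : Fin r × Fin r // q.2 ≤ q.1}

/-- The log-Cholesky parametrization `ω ↦ W`: `W` is lower triangular with
`W_{ii} = exp(ω_{ii})` and `W_{ij} = ω_{ij}` for `j < i`. -/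
noncomputable def Wof {r : ℕ} (ω : LTIdx r → ℝ) : Matrix (Fin r) (Fin r) ℝ :=
  fun i j => if h : j ≤ i then
      (if i = j then Real.exp (ω ⟨(i, j), h⟩) else ω ⟨(i, j), h⟩) else 0

/-!
Since `W` is lower triangular with diagonal `exp ω_ii`, `log |Ω| = 2 ∑ᵢ ω_ii`, and
`bᵀ Ω b = ‖Wᵀ b‖²`. Each entry `W_q` depends on `ω_q` alone, with `∂W_q/∂ω_q = J^W_q`, so the
quadratic term contributes `−J^W_q (b bᵀ W)_q`. As `W⁻¹` is lower triangular with diagonal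
`1 / W_ii`, `J^W_q (W^{-T})_q` is the indicator of the diagonal, which is the gradient of
`∑ᵢ ω_ii`.
-/

open Real

theorem Matrix.BlockTriangular.mul_apply_self {m α R : Type*} [Fintype m]
    [NonUnitalNonAssocSemiring R] [LinearOrder α] {b : m → α} (hb : Function.Injective b)
    {M N : Matrix m m R} (hM : M.BlockTriangular b) (hN : N.BlockTriangular b) (i : m) :
    (M * N) i i = M i i * N i i := by
  rw [mul_apply]
  refine Finset.sum_eq_single i (fun k _ hki => ?_) (by simp)
  rcases lt_or_gt_of_ne (hb.ne hki) with hlt | hgt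
  · rw [hM hlt, zero_mul]
  · rw [hN hgt, mul_zero]

theorem Matrix.dotProduct_mul_transpose_mulVec {m n R : Type*} [Fintype m] [Fintype n]
    [CommSemiring R] (A : Matrix m n R) (b : m → R) :
    b ⬝ᵥ ((A * Aᵀ) *ᵥ b) = (b ᵥ* A) ⬝ᵥ (b ᵥ* A) := by
  rw [← mulVec_mulVec, dotProduct_mulVec, mulVec_transpose]

@[simp]
theorem dotCLM_apply {ι : Type*} [Fintype ι] (a v : ι → ℝ) : dotCLM a v = a ⬝ᵥ v := rfl

theorem HasFDerivAt.dotCLM_of_apply_single {ι : Type*} [Fintype ι] [DecidableEq ι]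
    {f : (ι → ℝ) → ℝ} {L : (ι → ℝ) →L[ℝ] ℝ} {x g : ι → ℝ} (hf : HasFDerivAt f L x)
    (hL : ∀ q, L (Pi.single q 1) = g q) : HasFDerivAt f (dotCLM g) x := by
  refine hf.congr_fderiv <|
    ContinuousLinearMap.coe_injective (LinearMap.pi_ext fun q t => ?_)
  have ht : (Pi.single q t : ι → ℝ) = t • Pi.single q 1 := by simp [← Pi.single_smul]
  simp [ht, hL]

namespace LTIdx

variable {r : ℕ}

def diag (i : Fin r) : LTIdx r := ⟨(i, i), le_rfl⟩

end LTIdx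

section Wof

variable {r : ℕ} (ω : LTIdx r → ℝ)

theorem Wof_apply_self (i : Fin r) : Wof ω i i = exp (ω (LTIdx.diag i)) := by
  simp [Wof, LTIdx.diag]

theorem Wof_apply_of_lt {i j : Fin r} (h : j < i) : Wof ω i j = ω ⟨(i, j), h.le⟩ := by
  simp [Wof, h.le, h.ne']

theorem Wof_apply_of_gt {i j : Fin r} (h : i < j) : Wof ω i j = 0 := by
  simp [Wof, h]

theorem isLowerTriangular_Wof : (Wof ω).IsLowerTriangular :=
  fun _ _ h => Wof_apply_of_gt ω h

theorem det_Wof : (Wof ω).det = exp (∑ i, ω (LTIdx.diag i)) := by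
  simp [det_of_isLowerTriangular _ (isLowerTriangular_Wof ω), Wof_apply_self, exp_sum]

theorem log_det_Wof_mul_transpose :
    log (Wof ω * (Wof ω)ᵀ).det = 2 * ∑ i, ω (LTIdx.diag i) := by
  rw [det_mul, det_transpose, det_Wof, ← exp_add, log_exp]
  ring

/-- The entry of `v(J^W)` at `q`, which is `∂W_q/∂ω_q`. -/
noncomputable def logCholeskyJac (q : LTIdx r) : ℝ :=
  if q.1.1 = q.1.2 then Wof ω q.1.1 q.1.1 else 1

theorem logCholeskyJac_mul_inv_transpose_apply (q : LTIdx r) :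
    logCholeskyJac ω q * (Wof ω)⁻¹ᵀ q.1.1 q.1.2 = if q.1.1 = q.1.2 then 1 else 0 := by
  obtain ⟨⟨i, j⟩, hji : j ≤ i⟩ := q
  have hW : IsUnit (Wof ω).det := by rw [det_Wof]; exact (exp_pos _).ne'.isUnit
  have := (Wof ω).invertibleOfIsUnitDet hW
  have hWinv := blockTriangular_inv_of_blockTriangular (isLowerTriangular_Wof ω)
  rcases hji.lt_or_eq with hlt | rfl
  · simp [logCholeskyJac, hlt.ne', hWinv hlt]
  · simp only [logCholeskyJac, transpose_apply, if_true]
    rw [← (isLowerTriangular_Wof ω).mul_apply_self OrderDual.toDual.injective hWinv,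
      mul_nonsing_inv _ hW, one_apply_eq]

end Wof

section Derivative

variable {r : ℕ} (ω0 : LTIdx r → ℝ)

theorem hasFDerivAt_Wof_apply (i j : Fin r) :
    HasFDerivAt (fun ω => Wof ω i j)
      (dotCLM fun q => if q.1 = (i, j) then logCholeskyJac ω0 q else 0) ω0 := by
  rcases lt_trichotomy j i with hlt | rfl | hgt
  · simp_rw [Wof_apply_of_lt _ hlt]
    refine (hasFDerivAt_apply _ ω0).dotCLM_of_apply_single fun ⟨⟨k, l⟩, _⟩ => ?_
    by_cases h : k = i ∧ l = j
    · obtain ⟨rfl, rfl⟩ := h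
      simp [logCholeskyJac, hlt.ne']
    · simp [Subtype.ext_iff, h]
  · simp_rw [Wof_apply_self]
    refine (hasFDerivAt_apply _ ω0).exp.dotCLM_of_apply_single fun ⟨⟨k, l⟩, _⟩ => ?_
    by_cases h : k = j ∧ l = j
    · obtain ⟨rfl, rfl⟩ := h
      simp [logCholeskyJac, LTIdx.diag, Wof_apply_self]
    · simp [LTIdx.diag, Subtype.ext_iff, h]
  · simp_rw [Wof_apply_of_gt _ hgt]
    refine (hasFDerivAt_const 0 ω0).dotCLM_of_apply_single fun ⟨⟨k, l⟩, hlk⟩ => ?_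
    rw [if_neg (by rintro ⟨⟩; exact hgt.not_ge hlk)]
    rfl

theorem hasFDerivAt_log_det_Wof_mul_transpose :
    HasFDerivAt (fun ω : LTIdx r → ℝ => log (Wof ω * (Wof ω)ᵀ).det)
      (dotCLM fun q => if q.1.1 = q.1.2 then 2 else 0) ω0 := by
  simp_rw [log_det_Wof_mul_transpose]
  refine ((HasFDerivAt.fun_sum fun i _ => hasFDerivAt_apply (LTIdx.diag i) ω0).const_mul 2)
    |>.dotCLM_of_apply_single fun ⟨⟨k, l⟩, _⟩ => ?_
  rcases eq_or_ne k l with rfl | hkl <;> simp [Pi.single_apply, LTIdx.diag, Subtype.ext_iff, *]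

theorem hasFDerivAt_quadratic_Wof_mul_transpose (b : Fin r → ℝ) :
    HasFDerivAt (fun ω => b ⬝ᵥ ((Wof ω * (Wof ω)ᵀ) *ᵥ b))
      (dotCLM fun q => 2 * (logCholeskyJac ω0 q * b q.1.1 * (b ᵥ* Wof ω0) q.1.2)) ω0 := by
  simp_rw [dotProduct_mul_transpose_mulVec]
  have hc (j : Fin r) : HasFDerivAt (fun ω => (b ᵥ* Wof ω) j)
      (∑ i, b i • dotCLM fun q => if q.1 = (i, j) then logCholeskyJac ω0 q else 0) ω0 :=
    .fun_sum (u := Finset.univ) fun i _ => (hasFDerivAt_Wof_apply ω0 i j).const_mul (b i)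
  refine (HasFDerivAt.fun_sum (u := Finset.univ) fun j _ => (hc j).mul (hc j))
    |>.dotCLM_of_apply_single fun ⟨⟨k, l⟩, _⟩ => ?_
  simp only [_root_.sum_apply, _root_.add_apply, _root_.smul_apply, dotCLM_apply,
    dotProduct_single_one, smul_eq_mul, Prod.ext_iff, ite_and, mul_ite, mul_zero, ← two_mul,
    Finset.sum_ite_eq, Finset.mem_univ, if_true]
  ring

end Derivative

/-- **Gradient of `(1/2) log|Ω| − (1/2) bᵀΩb` with respect to the log-Cholesky
parameter `ω`**, where `Ω = WWᵀ`: it equals `D^W v(W^{−T} − b bᵀ W)`, with `D^W` the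
diagonal matrix with diagonal `v(J^W)`, `J^W_{ii} = W_{ii}` and off-diagonal entries 1. -/
theorem gradient_logdet_quadratic_logCholesky
    (r : ℕ) (b : Fin r → ℝ) (ω0 : LTIdx r → ℝ) :
    HasFDerivAt
      (fun ω : LTIdx r → ℝ =>
        (1 / 2) * Real.log ((Wof ω * (Wof ω)ᵀ).det)
          - (1 / 2) * (b ⬝ᵥ ((Wof ω * (Wof ω)ᵀ) *ᵥ b)))
      (dotCLM (fun q : LTIdx r =>
        (if q.1.1 = q.1.2 then Wof ω0 q.1.1 q.1.1 else 1) *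
          (((Wof ω0)⁻¹ᵀ - Matrix.vecMulVec b b * Wof ω0) q.1.1 q.1.2)))
      ω0 := by
  refine (((hasFDerivAt_log_det_Wof_mul_transpose ω0).const_mul (1 / 2)).sub
    ((hasFDerivAt_quadratic_Wof_mul_transpose ω0 b).const_mul (1 / 2)))
    |>.dotCLM_of_apply_single fun q => ?_
  change _ = logCholeskyJac ω0 q * _
  rw [Matrix.sub_apply, mul_sub, logCholeskyJac_mul_inv_transpose_apply, vecMulVec_mul,
    vecMulVec_apply]
  simp only [_root_.sub_apply, _root_.smul_apply, dotCLM_apply, dotProduct_single_one,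
    smul_eq_mul]
  split_ifs <;> ring
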